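/- Assume f̄ < f(1). Then there exists ε ∈ (0, 1/2) such that for all t ∈ [0,∞) with ∅ ≠ I^{Θ(t)} ⊆ [1−ε, 1] and Θ₃(t) ≤ 0 it holds that (d/dt) |Θ₃(t)|² ≤ 0. -/

import Mathlib

/-!
The constraint `g` does not involve `θ₃` (the coordinate `θ 2`), so `∇g` has no third
component and the third component of `𝔊` is `∂𝓛/∂θ₃ = 2 θ₃ ∫₀¹ (σ - m)² + 2 ∫₀¹ σ (f̄ - f)`,
where `σ(s) = max{θ₁ s + θ₂, 0}`; this is read off from `𝓛` being quadratic in `θ₃`.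
Choose `ε` so that `f > f̄` on `[1 - ε, 1]`. If the active interval lies in `[1 - ε, 1]`, then
`σ (f̄ - f) ≤ 0` pointwise, so for `θ₃ ≤ 0` the partial derivative is `≤ 0`, and
`d/dt Θ₃² = -2 Θ₃ ∂𝓛/∂θ₃(Θ) ≤ 0`. The derivative of `Θ₃` exists because `∂𝓛/∂θ₃` is
continuous and agrees with `𝔊₃` on the open set `|θ₁| + |θ₂| > 0`; for the continuity, `f` is
first replaced by a continuous extension of `f|[0,1]`, which changes neither `f̄` nor `𝓛`.
-/

open MeasureTheory Real Set
open scoped RealInnerProductSpace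

/-- The mean value `f̄ = ∫₀¹ f(x) dx` of the target function. -/
noncomputable def fbar (f : ℝ → ℝ) : ℝ := ∫ s in (0:ℝ)..1, f s

/-- `m(θ) = ∫₀¹ max{θ₁ s + θ₂, 0} ds`. -/
noncomputable def mfun (θ : EuclideanSpace ℝ (Fin 3)) : ℝ :=
  ∫ s in (0:ℝ)..1, max (θ 0 * s + θ 1) 0

/-- The risk function `𝓛`. -/
noncomputable def riskL (f : ℝ → ℝ) (θ : EuclideanSpace ℝ (Fin 3)) : ℝ :=
  ∫ s in (0:ℝ)..1, (θ 2 * (max (θ 0 * s + θ 1) 0 - mfun θ) + fbar f - f s) ^ 2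

/-- `g(θ) = θ₁² + θ₂²`; the manifold `ℳ` is `g⁻¹(1)`. -/
noncomputable def gfun (θ : EuclideanSpace ℝ (Fin 3)) : ℝ := θ 0 ^ 2 + θ 1 ^ 2

/-- The activity interval `I^θ = {s ∈ [0,1] : θ₁ s + θ₂ > 0}`. -/
def Iact (θ : EuclideanSpace ℝ (Fin 3)) : Set ℝ :=
  {s ∈ Set.Icc (0:ℝ) 1 | 0 < θ 0 * s + θ 1}

open Filter Topology

lemma Icc_mem_nhdsWithin_Ici_zero (t : ℝ) : Icc 0 (t + 1) ∈ 𝓝[Ici 0] t :=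
  mem_of_superset (inter_mem_nhdsWithin _ (Iio_mem_nhds (lt_add_one t)))
    fun _ hu => ⟨hu.1, hu.2.le⟩

section IntegralEquation

variable {E F : Type*} [NormedAddCommGroup E] [NormedSpace ℝ E]
  [NormedAddCommGroup F] [NormedSpace ℝ F] [CompleteSpace F]

def SolvesIntegralEq (x g : ℝ → E) : Prop :=
  (∀ T, 0 ≤ T → IntervalIntegrable g volume 0 T) ∧
    ∀ u, 0 ≤ u → x u = x 0 - ∫ v in (0:ℝ)..u, g v

variable {x g : ℝ → E} {t : ℝ}

lemma SolvesIntegralEq.comp_continuousLinearMap [CompleteSpace E] (h : SolvesIntegralEq x g)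
    (L : E →L[ℝ] F) :
    SolvesIntegralEq (L ∘ x) (L ∘ g) :=
  ⟨fun T hT => ⟨L.integrable_comp (h.1 T hT).1, L.integrable_comp (h.1 T hT).2⟩,
    fun u hu => by
      simp only [Function.comp_apply, h.2 u hu, map_sub, L.intervalIntegral_comp_comm (h.1 u hu)]⟩

lemma SolvesIntegralEq.continuousWithinAt (h : SolvesIntegralEq x g) (ht : 0 ≤ t) :
    ContinuousWithinAt x (Ici 0) t := by
  have hprim : ContinuousWithinAt (fun u => ∫ v in (0:ℝ)..u, g v) (Icc 0 (t + 1)) t := by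
    have := intervalIntegral.continuousOn_primitive_interval' (h.1 (t + 1) (by linarith))
      left_mem_uIcc
    rw [uIcc_of_le (by linarith)] at this
    exact this t ⟨ht, by linarith⟩
  exact ((continuousWithinAt_const.sub hprim).mono_of_mem_nhdsWithin
    (Icc_mem_nhdsWithin_Ici_zero t)).congr (fun u hu => h.2 u hu) (h.2 t ht)

lemma SolvesIntegralEq.hasDerivWithinAt [CompleteSpace E] (h : SolvesIntegralEq x g) (ht : 0 ≤ t)
    (hg : ContinuousWithinAt g (Ici 0) t) : HasDerivWithinAt x (-g t) (Ici 0) t := by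
  have hI : IntervalIntegrable g volume 0 (t + 1) := h.1 (t + 1) (by linarith)
  -- makes `𝓝[Icc 0 (t + 1)] t` an `FTCFilter`
  have : Fact (t ∈ Icc 0 (t + 1)) := ⟨⟨ht, by linarith⟩⟩
  have hprim : HasDerivWithinAt (fun u => ∫ v in (0:ℝ)..u, g v) (g t) (Icc 0 (t + 1)) t :=
    intervalIntegral.integral_hasDerivWithinAt_right (h.1 t ht)
      ⟨Icc 0 (t + 1), self_mem_nhdsWithin,
        ((intervalIntegrable_iff_integrableOn_Icc_of_le (by linarith)).1 hI).aestronglyMeasurable⟩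
      (hg.mono Icc_subset_Ici_self)
  exact ((hprim.const_sub (x 0)).mono_of_mem_nhdsWithin
    (Icc_mem_nhdsWithin_Ici_zero t)).congr (fun u hu => h.2 u hu) (h.2 t ht)

end IntegralEquation

lemma inner_gradient_eq_of_hasDerivAt {H : Type*} [NormedAddCommGroup H] [InnerProductSpace ℝ H]
    [CompleteSpace H] {F : H → ℝ} {θ v : H} {d : ℝ} (hF : DifferentiableAt ℝ F θ)
    (hd : HasDerivAt (fun u : ℝ => F (θ + u • v)) d 0) : ⟪gradient F θ, v⟫ = d := by
  rw [gradient, InnerProductSpace.toDual_symm_apply, ← hF.lineDeriv_eq_fderiv]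
  exact hd.deriv

lemma gradient_apply_eq_of_hasDerivAt {ι : Type*} [Fintype ι] [DecidableEq ι]
    {F : EuclideanSpace ℝ ι → ℝ} {θ : EuclideanSpace ℝ ι} {i : ι} {d : ℝ}
    (hF : DifferentiableAt ℝ F θ)
    (hd : HasDerivAt (fun u : ℝ => F (θ + u • EuclideanSpace.single i 1)) d 0) :
    gradient F θ i = d := by
  rw [← inner_gradient_eq_of_hasDerivAt hF hd, EuclideanSpace.inner_single_right]
  simp

local notation "ℝ³" => EuclideanSpace ℝ (Fin 3)

lemma gfun_add_smul_single_two (θ : ℝ³) (u : ℝ) :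
    gfun (θ + u • EuclideanSpace.single 2 1) = gfun θ := by
  simp [gfun]

lemma gradient_gfun_two (θ : ℝ³) : gradient gfun θ 2 = 0 :=
  gradient_apply_eq_of_hasDerivAt (by unfold gfun; fun_prop)
    (by simpa only [gfun_add_smul_single_two] using hasDerivAt_const (0 : ℝ) (gfun θ))

def neuron (θ : ℝ³) (s : ℝ) : ℝ := max (θ 0 * s + θ 1) 0

noncomputable def neuronVariance (θ : ℝ³) : ℝ := ∫ s in (0:ℝ)..1, (neuron θ s - mfun θ) ^ 2

noncomputable def neuronCorrelation (f : ℝ → ℝ) (θ : ℝ³) : ℝ :=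
  ∫ s in (0:ℝ)..1, neuron θ s * (fbar f - f s)

noncomputable def riskSlope (f : ℝ → ℝ) (θ : ℝ³) : ℝ :=
  2 * θ 2 * neuronVariance θ + 2 * neuronCorrelation f θ

lemma continuous_uncurry_neuron : Continuous (fun p : ℝ³ × ℝ => neuron p.1 p.2) := by
  unfold neuron; fun_prop

@[fun_prop]
lemma continuous_neuron (θ : ℝ³) : Continuous (neuron θ) := by
  unfold neuron; fun_prop

lemma neuronVariance_nonneg (θ : ℝ³) : 0 ≤ neuronVariance θ :=
  intervalIntegral.integral_nonneg zero_le_one fun _ _ => sq_nonneg _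

lemma mfun_add_smul_single_two (θ : ℝ³) (u : ℝ) :
    mfun (θ + u • EuclideanSpace.single 2 1) = mfun θ := by
  simp [mfun]

lemma integral_fbar_sub {f : ℝ → ℝ} (hf : Continuous f) :
    ∫ s in (0:ℝ)..1, (fbar f - f s) = 0 := by
  rw [intervalIntegral.integral_sub intervalIntegrable_const (hf.intervalIntegrable 0 1)]
  simp [fbar]

lemma riskL_add_smul_single_two {f : ℝ → ℝ} (hf : Continuous f) (θ : ℝ³) (u : ℝ) :
    riskL f (θ + u • EuclideanSpace.single 2 1) =
      riskL f θ + riskSlope f θ * u + neuronVariance θ * u ^ 2 := by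
  set c := fun s => neuron θ s - mfun θ
  set r := fun s => θ 2 * c s + fbar f - f s
  have hshift : riskL f (θ + u • EuclideanSpace.single 2 1) =
      ∫ s in (0:ℝ)..1, (r s ^ 2 + u * (2 * c s * r s) + u ^ 2 * c s ^ 2) := by
    simp only [riskL, mfun_add_smul_single_two]
    congr 1; ext s
    simp only [r, c, neuron, PiLp.add_apply, PiLp.smul_apply, PiLp.single_eq_same, smul_eq_mul,
      ne_eq, Fin.reduceEq, not_false_eq_true, PiLp.single_eq_of_ne, mul_zero, add_zero]
    ring
  have hslope : ∫ s in (0:ℝ)..1, 2 * c s * r s = riskSlope f θ := by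
    have : ∀ s, 2 * c s * r s = 2 * θ 2 * c s ^ 2 + 2 * (neuron θ s * (fbar f - f s))
        - 2 * mfun θ * (fbar f - f s) := fun s => by simp only [c, r]; ring
    simp only [this]
    rw [intervalIntegral.integral_sub, intervalIntegral.integral_add,
      intervalIntegral.integral_const_mul, intervalIntegral.integral_const_mul,
      intervalIntegral.integral_const_mul, integral_fbar_sub hf]
    · simp [riskSlope, neuronVariance, neuronCorrelation, c]
    all_goals exact Continuous.intervalIntegrable (by fun_prop) _ _
  rw [hshift, intervalIntegral.integral_add, intervalIntegral.integral_add,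
    intervalIntegral.integral_const_mul, intervalIntegral.integral_const_mul, hslope]
  · simp only [riskL, neuronVariance, neuron, r, c]
    ring
  all_goals exact Continuous.intervalIntegrable (by fun_prop) _ _

lemma gradient_riskL_two {f : ℝ → ℝ} (hf : Continuous f) {θ : ℝ³}
    (hd : DifferentiableAt ℝ (riskL f) θ) : gradient (riskL f) θ 2 = riskSlope f θ := by
  refine gradient_apply_eq_of_hasDerivAt hd ?_
  simp only [riskL_add_smul_single_two hf]
  exact ((((hasDerivAt_id (0:ℝ)).const_mul (riskSlope f θ)).const_add (riskL f θ)).add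
    ((hasDerivAt_pow 2 (0:ℝ)).const_mul (neuronVariance θ))).congr_deriv (by norm_num)

lemma continuous_riskSlope {f : ℝ → ℝ} (hf : Continuous f) : Continuous (riskSlope f) := by
  have hm : Continuous mfun :=
    intervalIntegral.continuous_parametric_intervalIntegral_of_continuous' continuous_uncurry_neuron 0 1
  have hV : Continuous neuronVariance :=
    intervalIntegral.continuous_parametric_intervalIntegral_of_continuous'
      ((continuous_uncurry_neuron.sub (hm.comp continuous_fst)).pow 2) 0 1
  have hC : Continuous (neuronCorrelation f) :=
    intervalIntegral.continuous_parametric_intervalIntegral_of_continuous'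
      (continuous_uncurry_neuron.mul (continuous_const.sub (hf.comp continuous_snd))) 0 1
  unfold riskSlope
  fun_prop

lemma neuronCorrelation_nonpos {f : ℝ → ℝ} (hf : Continuous f) {θ : ℝ³}
    (h : ∀ s ∈ Iact θ, fbar f ≤ f s) : neuronCorrelation f θ ≤ 0 := by
  have hle : ∀ s ∈ Icc (0:ℝ) 1, neuron θ s * (fbar f - f s) ≤ 0 := by
    intro s hs
    rcases le_or_gt (θ 0 * s + θ 1) 0 with hoff | hon
    · simp [neuron, max_eq_right hoff]
    · exact mul_nonpos_of_nonneg_of_nonpos (le_max_right _ _) (sub_nonpos.2 (h s ⟨hs, hon⟩))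
  simpa [neuronCorrelation] using intervalIntegral.integral_mono_on zero_le_one
    ((by fun_prop : Continuous _).intervalIntegrable 0 1) intervalIntegrable_const hle

lemma riskSlope_nonpos {f : ℝ → ℝ} (hf : Continuous f) {θ : ℝ³} (hθ : θ 2 ≤ 0)
    (h : ∀ s ∈ Iact θ, fbar f ≤ f s) : riskSlope f θ ≤ 0 := by
  have := mul_nonpos_of_nonpos_of_nonneg hθ (neuronVariance_nonneg θ)
  have := neuronCorrelation_nonpos hf h
  unfold riskSlope; linarith

lemma abs_add_abs_pos_of_Iact_nonempty {θ : ℝ³} (h : (Iact θ).Nonempty) :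
    0 < |θ 0| + |θ 1| := by
  obtain ⟨s, ⟨hs0, hs1⟩, hs⟩ := h
  calc 0 < θ 0 * s + θ 1 := hs
    _ ≤ |θ 0| + |θ 1| := by
      nlinarith [abs_nonneg (θ 0), le_abs_self (θ 0), neg_abs_le (θ 0), le_abs_self (θ 1)]

lemma exists_forall_Icc_sub_lt {f : ℝ → ℝ} {b c r : ℝ} (hf : ContinuousWithinAt f (Iic b) b)
    (hc : c < f b) (hr : 0 < r) : ∃ ε ∈ Ioo 0 r, ∀ s ∈ Icc (b - ε) b, c < f s := by
  obtain ⟨l, hl, hsub⟩ := mem_nhdsLE_iff_exists_Icc_subset.1 (hf.eventually (lt_mem_nhds hc))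
  refine ⟨min (b - l) (r / 2),
    ⟨by simpa using ⟨hl, hr⟩, by linarith [min_le_right (b - l) (r / 2)]⟩,
    fun s hs => hsub ⟨?_, hs.2⟩⟩
  linarith [hs.1, min_le_left (b - l) (r / 2)]

lemma exists_continuous_eqOn_Icc {f : ℝ → ℝ} {a b : ℝ} (hab : a ≤ b)
    (hf : ContinuousOn f (Icc a b)) :
    ∃ g : ℝ → ℝ, Continuous g ∧ EqOn g f (Icc a b) :=
  ⟨IccExtend hab ((Icc a b).domRestrict f),
    (continuousOn_iff_continuous_domRestrict.1 hf).Icc_extend',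
    fun _ hs => IccExtend_of_mem _ _ hs⟩

lemma fbar_congr {f g : ℝ → ℝ} (h : EqOn f g (Icc 0 1)) : fbar f = fbar g :=
  intervalIntegral.integral_congr (by rwa [uIcc_of_le zero_le_one])

lemma riskL_congr {f g : ℝ → ℝ} (h : EqOn f g (Icc 0 1)) : riskL f = riskL g := by
  ext θ
  refine intervalIntegral.integral_congr fun s hs => ?_
  rw [uIcc_of_le zero_le_one] at hs
  simp only [fbar_congr h, h hs]

theorem stmt15_general
    (f : ℝ → ℝ) (hf : ContinuousOn f (Set.Icc 0 1))
    (hfbar : fbar f < f 1)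
    (h𝓛diff : ∀ θ : EuclideanSpace ℝ (Fin 3), 0 < |θ 0| + |θ 1| →
      DifferentiableAt ℝ (riskL f) θ)
    (𝔊 : EuclideanSpace ℝ (Fin 3) → EuclideanSpace ℝ (Fin 3))
    (h𝔊 : ∀ θ : EuclideanSpace ℝ (Fin 3), 0 < |θ 0| + |θ 1| →
      𝔊 θ = gradient (riskL f) θ -
        ((‖gradient gfun θ‖ ^ 2)⁻¹ * ⟪gradient (riskL f) θ, gradient gfun θ⟫) •
          gradient gfun θ)
    (Θ : ℝ → EuclideanSpace ℝ (Fin 3))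
    (hΘint : ∀ t : ℝ, 0 ≤ t → IntervalIntegrable (fun u => 𝔊 (Θ u)) volume 0 t)
    (hΘ : ∀ t : ℝ, 0 ≤ t → Θ t = Θ 0 - ∫ u in (0:ℝ)..t, 𝔊 (Θ u)) :
    ∃ ε ∈ Set.Ioo (0:ℝ) (1/2), ∀ t : ℝ, 0 ≤ t →
      (Iact (Θ t)).Nonempty → Iact (Θ t) ⊆ Set.Icc (1 - ε) 1 → Θ t 2 ≤ 0 →
      ∃ v : ℝ, v ≤ 0 ∧ HasDerivWithinAt (fun u => |Θ u 2| ^ 2) v (Set.Ici 0) t := by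
  obtain ⟨fc, hfc, hfcf⟩ := exists_continuous_eqOn_Icc zero_le_one hf
  rw [riskL_congr hfcf.symm] at h𝓛diff h𝔊
  obtain ⟨ε, hε, hfε⟩ := exists_forall_Icc_sub_lt (b := 1) (c := fbar fc) hfc.continuousWithinAt
    (by rwa [fbar_congr hfcf, hfcf ⟨zero_le_one, le_rfl⟩]) one_half_pos
  refine ⟨ε, hε, fun t ht hne hsub hθ2 => ?_⟩
  have hslope : ∀ θ : ℝ³, 0 < |θ 0| + |θ 1| → 𝔊 θ 2 = riskSlope fc θ := fun θ hθ => by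
    simp [h𝔊 θ hθ, gradient_gfun_two, gradient_riskL_two hfc (h𝓛diff θ hθ)]
  have hpos := abs_add_abs_pos_of_Iact_nonempty hne
  have hU : IsOpen {θ : ℝ³ | 0 < |θ 0| + |θ 1|} := isOpen_lt continuous_const (by fun_prop)
  have hG : ContinuousAt (fun θ : ℝ³ => 𝔊 θ 2) (Θ t) :=
    (continuous_riskSlope hfc).continuousAt.congr <|
      eventually_of_mem (hU.mem_nhds hpos) fun θ hθ => (hslope θ hθ).symm
  have hflow : SolvesIntegralEq Θ (𝔊 ∘ Θ) := ⟨hΘint, hΘ⟩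
  have hderiv : HasDerivWithinAt (fun u => Θ u 2) (-riskSlope fc (Θ t)) (Ici 0) t := by
    rw [← hslope _ hpos]
    exact (hflow.comp_continuousLinearMap (EuclideanSpace.proj 2)).hasDerivWithinAt ht
      (hG.comp_continuousWithinAt (hflow.continuousWithinAt ht))
  have hnonpos := riskSlope_nonpos hfc hθ2 fun s hs => (hfε s (hsub hs)).le
  refine ⟨2 * Θ t 2 * -riskSlope fc (Θ t), by nlinarith, ?_⟩
  simp only [sq_abs]
  exact (hderiv.pow 2).congr_deriv (by ring)

/-- Lemma 3.11: if `f̄ < f(1)`, then there exists `ε ∈ (0, 1/2)` such that `|Θ₃(t)|²` is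
non-increasing at every time `t` with `∅ ≠ I^{Θ(t)} ⊆ [1-ε, 1]` and `Θ₃(t) ≤ 0`. -/
theorem stmt15
    (f : ℝ → ℝ) (hf : ContinuousOn f (Set.Icc 0 1))
    (hfbar : fbar f < f 1)
    (h𝓛diff : ∀ θ : EuclideanSpace ℝ (Fin 3), 0 < |θ 0| + |θ 1| →
      DifferentiableAt ℝ (riskL f) θ)
    (𝔊 : EuclideanSpace ℝ (Fin 3) → EuclideanSpace ℝ (Fin 3))
    (h𝔊meas : Measurable 𝔊)
    (h𝔊loc : ∀ θ : EuclideanSpace ℝ (Fin 3),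
      ∃ r > (0:ℝ), ∃ C : ℝ, ∀ x ∈ Metric.ball θ r, ‖𝔊 x‖ ≤ C)
    (h𝔊 : ∀ θ : EuclideanSpace ℝ (Fin 3), 0 < |θ 0| + |θ 1| →
      𝔊 θ = gradient (riskL f) θ -
        ((‖gradient gfun θ‖ ^ 2)⁻¹ * ⟪gradient (riskL f) θ, gradient gfun θ⟫) •
          gradient gfun θ)
    (Θ : ℝ → EuclideanSpace ℝ (Fin 3))
    (hΘ0 : gfun (Θ 0) = 1)
    (hΘint : ∀ t : ℝ, 0 ≤ t → IntervalIntegrable (fun u => 𝔊 (Θ u)) volume 0 t)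
    (hΘ : ∀ t : ℝ, 0 ≤ t → Θ t = Θ 0 - ∫ u in (0:ℝ)..t, 𝔊 (Θ u)) :
    ∃ ε ∈ Set.Ioo (0:ℝ) (1/2), ∀ t : ℝ, 0 ≤ t →
      (Iact (Θ t)).Nonempty → Iact (Θ t) ⊆ Set.Icc (1 - ε) 1 → Θ t 2 ≤ 0 →
      ∃ v : ℝ, v ≤ 0 ∧ HasDerivWithinAt (fun u => |Θ u 2| ^ 2) v (Set.Ici 0) t :=
  stmt15_general f hf hfbar h𝓛diff 𝔊 h𝔊 Θ hΘint hΘ
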